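/- Let a, b, c ≥ 0 and s > 0, and for P > 0 define f(P) = (a + b·√P + c·P)·(√π/2)·erf(√(s·P))/√(s·P). Then f is nondecreasing on the set {P > 0 : c·P ≥ a} and concave on the set {P > 0 : c·P ≥ 3a}. -/

import Mathlib

/-- The error function `erf(y) = (2/√π)·∫₀^y e^{−u²} du`. -/
noncomputable def erf (y : ℝ) : ℝ := (2 / Real.sqrt Real.pi) * ∫ u in (0:ℝ)..y, Real.exp (-u ^ 2)

/-! Write `m(x) = (√π/2)·erf(√x)/√x`, the mean of `exp(-u²)` over `[0, √x]`, and
`N(P) = a + b√P + cP`, so that the function is `f(P) = N(P)·m(sP)`. The mean satisfies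
`2x·m'(x) = e^{-x} - m(x)` and `m(x) ≥ e^{-x}`, since the integrand is smallest at the right
endpoint. Hence `2P·f'(P) = (cP - a)·m(sP) + N(P)·e^{-sP}` and
`4P²·f''(P) = (3a - cP)·(m(sP) - e^{-sP}) - (b√P + 2sP·N(P))·e^{-sP}`, whose signs can be read
off on the two sets. -/

open Real

noncomputable def gaussIntegral (y : ℝ) : ℝ := ∫ u in (0:ℝ)..y, exp (-u ^ 2)

noncomputable def gaussMean (x : ℝ) : ℝ := gaussIntegral √x / √x

theorem hasDerivAt_gaussIntegral (y : ℝ) : HasDerivAt gaussIntegral (exp (-y ^ 2)) y :=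
  have hcont : Continuous fun u : ℝ => exp (-u ^ 2) := by fun_prop
  intervalIntegral.integral_hasDerivAt_right (hcont.intervalIntegrable _ _)
    (hcont.stronglyMeasurableAtFilter _ _) hcont.continuousAt

theorem mul_exp_neg_sq_le_gaussIntegral {y : ℝ} (hy : 0 ≤ y) :
    y * exp (-y ^ 2) ≤ gaussIntegral y := by
  have hmono : ∫ _ in (0:ℝ)..y, exp (-y ^ 2) ≤ gaussIntegral y :=
    intervalIntegral.integral_mono_on hy intervalIntegrable_const
      ((by fun_prop : Continuous fun u : ℝ => exp (-u ^ 2)).intervalIntegrable _ _)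
      fun u hu => exp_le_exp.2 <| neg_le_neg <| pow_le_pow_left₀ hu.1 hu.2 2
  simpa using hmono

theorem exp_neg_le_gaussMean {x : ℝ} (hx : 0 < x) : exp (-x) ≤ gaussMean x := by
  have h := mul_exp_neg_sq_le_gaussIntegral (sqrt_nonneg x)
  rw [sq_sqrt hx.le, ← le_div_iff₀' (sqrt_pos.2 hx)] at h
  exact h

theorem hasDerivAt_gaussMean {x : ℝ} (hx : 0 < x) :
    HasDerivAt gaussMean ((exp (-x) - gaussMean x) / (2 * x)) x := by
  have hr : √x ≠ 0 := (sqrt_pos.2 hx).ne'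
  have hsqrt := hasDerivAt_sqrt hx.ne'
  have h : HasDerivAt (fun x => gaussIntegral √x / √x) _ x :=
    ((hasDerivAt_gaussIntegral √x).comp x hsqrt).div hsqrt hr
  refine h.congr_deriv ?_
  rw [gaussMean, Function.comp_apply, sq_sqrt hx.le]
  field_simp

theorem hasDerivAt_gaussMean_const_mul {s P : ℝ} (hsP : 0 < s * P) :
    HasDerivAt (fun P => gaussMean (s * P))
      ((exp (-(s * P)) - gaussMean (s * P)) / (2 * P)) P := by
  have h := (hasDerivAt_gaussMean hsP).comp P ((hasDerivAt_id P).const_mul s)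
  refine h.congr_deriv ?_
  have : s ≠ 0 := by rintro rfl; simp at hsP
  have : P ≠ 0 := by rintro rfl; simp at hsP
  field_simp

section
variable (a b c s : ℝ)

noncomputable def sqrtQuadratic (P : ℝ) : ℝ := a + b * √P + c * P

noncomputable def specialFunction (P : ℝ) : ℝ := sqrtQuadratic a b c P * gaussMean (s * P)

noncomputable def specialFunctionDeriv (P : ℝ) : ℝ :=
  ((c * P - a) * gaussMean (s * P) + sqrtQuadratic a b c P * exp (-(s * P))) / (2 * P)

noncomputable def specialFunctionDeriv2 (P : ℝ) : ℝ :=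
  ((3 * a - c * P) * (gaussMean (s * P) - exp (-(s * P))) / 2
    - (b * √P / 2 + s * P * sqrtQuadratic a b c P) * exp (-(s * P))) / (2 * P ^ 2)

variable {a b c s}

theorem hasDerivAt_sqrtQuadratic {P : ℝ} (hP : 0 < P) :
    HasDerivAt (sqrtQuadratic a b c) (b / (2 * √P) + c) P := by
  have h := (((hasDerivAt_sqrt hP.ne').const_mul b).const_add a).add ((hasDerivAt_id' P).const_mul c)
  exact h.congr_deriv (by ring)

theorem sqrtQuadratic_nonneg {P : ℝ} (ha : 0 ≤ a) (hb : 0 ≤ b) (hcP : 0 ≤ c * P) :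
    0 ≤ sqrtQuadratic a b c P :=
  add_nonneg (add_nonneg ha (mul_nonneg hb (sqrt_nonneg P))) hcP

theorem hasDerivAt_specialFunction (hs : 0 < s) {P : ℝ} (hP : 0 < P) :
    HasDerivAt (specialFunction a b c s) (specialFunctionDeriv a b c s P) P := by
  have h := (hasDerivAt_sqrtQuadratic (a := a) (b := b) (c := c) hP).mul
    (hasDerivAt_gaussMean_const_mul (mul_pos hs hP))
  refine h.congr_deriv ?_
  have hsq : √P ^ 2 = P := sq_sqrt hP.le
  rw [specialFunctionDeriv, sqrtQuadratic]
  field_simp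
  linear_combination (-b * gaussMean (s * P)) * hsq

theorem hasDerivAt_specialFunctionDeriv (hs : 0 < s) {P : ℝ} (hP : 0 < P) :
    HasDerivAt (specialFunctionDeriv a b c s) (specialFunctionDeriv2 a b c s P) P := by
  have hm := hasDerivAt_gaussMean_const_mul (mul_pos hs hP)
  have hlin : HasDerivAt (fun P => c * P - a) c P := by
    simpa using ((hasDerivAt_id' P).const_mul c).sub_const a
  have he : HasDerivAt (fun P => exp (-(s * P))) (exp (-(s * P)) * -s) P := by
    simpa using ((hasDerivAt_id' P).const_mul s).neg.exp
  have hnum := (hlin.mul hm).add ((hasDerivAt_sqrtQuadratic (a := a) (b := b) (c := c) hP).mul he)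
  have h := hnum.div (by simpa using (hasDerivAt_id' P).const_mul 2) (by positivity)
  refine h.congr_deriv ?_
  have hsq : √P ^ 2 = P := sq_sqrt hP.le
  simp only [specialFunctionDeriv2, Pi.add_apply, Pi.mul_apply, sqrtQuadratic]
  field_simp
  linear_combination (-b * exp (-(s * P))) * hsq

theorem specialFunctionDeriv_nonneg (ha : 0 ≤ a) (hb : 0 ≤ b) (hs : 0 < s) {P : ℝ} (hP : 0 < P)
    (haP : a ≤ c * P) : 0 ≤ specialFunctionDeriv a b c s P := by
  have hm : 0 ≤ gaussMean (s * P) := (exp_pos _).le.trans (exp_neg_le_gaussMean (mul_pos hs hP))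
  have hN := sqrtQuadratic_nonneg (P := P) ha hb (ha.trans haP)
  have hm' := mul_nonneg (sub_nonneg.2 haP) hm
  unfold specialFunctionDeriv
  positivity

theorem specialFunctionDeriv2_nonpos (ha : 0 ≤ a) (hb : 0 ≤ b) (hs : 0 < s) {P : ℝ} (hP : 0 < P)
    (haP : 3 * a ≤ c * P) : specialFunctionDeriv2 a b c s P ≤ 0 := by
  have hme : 0 ≤ gaussMean (s * P) - exp (-(s * P)) :=
    sub_nonneg.2 (exp_neg_le_gaussMean (mul_pos hs hP))
  have hN := sqrtQuadratic_nonneg (c := c) (P := P) ha hb (by linarith)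
  have h1 : (3 * a - c * P) * (gaussMean (s * P) - exp (-(s * P))) ≤ 0 :=
    mul_nonpos_of_nonpos_of_nonneg (by linarith) hme
  have h2 : 0 ≤ (b * √P / 2 + s * P * sqrtQuadratic a b c P) * exp (-(s * P)) := by positivity
  unfold specialFunctionDeriv2
  exact div_nonpos_of_nonpos_of_nonneg (by linarith) (by positivity)

end

theorem convex_setOf_pos_and_le_mul (c k : ℝ) : Convex ℝ {P : ℝ | 0 < P ∧ k ≤ c * P} :=
  (convex_Ioi 0).inter (convex_halfSpace_ge (IsLinearMap.isLinearMap_smul c) k)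

theorem sqrt_pi_div_two_mul_erf (y : ℝ) : √π / 2 * erf y = gaussIntegral y := by
  have : √π ≠ 0 := (sqrt_pos.2 pi_pos).ne'
  rw [erf, gaussIntegral]
  field_simp

theorem special_function_monotone_concave_general (a b c s : ℝ)
    (ha : 0 ≤ a) (hb : 0 ≤ b) (hs : 0 < s) :
    MonotoneOn
      (fun P => (a + b * Real.sqrt P + c * P) * (Real.sqrt Real.pi / 2) *
        erf (Real.sqrt (s * P)) / Real.sqrt (s * P))
      {P : ℝ | 0 < P ∧ a ≤ c * P} ∧
    ConcaveOn ℝ {P : ℝ | 0 < P ∧ 3 * a ≤ c * P}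
      (fun P => (a + b * Real.sqrt P + c * P) * (Real.sqrt Real.pi / 2) *
        erf (Real.sqrt (s * P)) / Real.sqrt (s * P)) := by
  have hf : (fun P => (a + b * Real.sqrt P + c * P) * (Real.sqrt Real.pi / 2) *
      erf (Real.sqrt (s * P)) / Real.sqrt (s * P)) = specialFunction a b c s := by
    ext P
    rw [mul_assoc, sqrt_pi_div_two_mul_erf, mul_div_assoc]
    rfl
  rw [hf]
  have hF (k : ℝ) : ∀ P ∈ {P : ℝ | 0 < P ∧ k ≤ c * P},
      HasDerivAt (specialFunction a b c s) (specialFunctionDeriv a b c s P) P :=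
    fun P hP => hasDerivAt_specialFunction hs hP.1
  refine ⟨monotoneOn_of_hasDerivWithinAt_nonneg (convex_setOf_pos_and_le_mul c a)
      (fun P hP => (hF a P hP).continuousAt.continuousWithinAt)
      (fun P hP => (hF a P (interior_subset hP)).hasDerivWithinAt)
      fun P hP => specialFunctionDeriv_nonneg ha hb hs (interior_subset hP).1 (interior_subset hP).2,
    concaveOn_of_hasDerivWithinAt2_nonpos (convex_setOf_pos_and_le_mul c (3 * a))
      (fun P hP => (hF _ P hP).continuousAt.continuousWithinAt)
      (fun P hP => (hF _ P (interior_subset hP)).hasDerivWithinAt)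
      (fun P hP => (hasDerivAt_specialFunctionDeriv hs (interior_subset hP).1).hasDerivWithinAt)
      fun P hP => specialFunctionDeriv2_nonpos ha hb hs (interior_subset hP).1 (interior_subset hP).2⟩

theorem special_function_monotone_concave (a b c s : ℝ)
    (ha : 0 ≤ a) (hb : 0 ≤ b) (hc : 0 ≤ c) (hs : 0 < s) :
    MonotoneOn
      (fun P => (a + b * Real.sqrt P + c * P) * (Real.sqrt Real.pi / 2) *
        erf (Real.sqrt (s * P)) / Real.sqrt (s * P))
      {P : ℝ | 0 < P ∧ a ≤ c * P} ∧
    ConcaveOn ℝ {P : ℝ | 0 < P ∧ 3 * a ≤ c * P}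
      (fun P => (a + b * Real.sqrt P + c * P) * (Real.sqrt Real.pi / 2) *
        erf (Real.sqrt (s * P)) / Real.sqrt (s * P)) :=
  special_function_monotone_concave_general a b c s ha hb hs
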